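/- arXiv:2412.12514 — 4 statements merged into one kernel-verified Lean document; each statement's English description precedes it below -/
import Mathlib

section
/- For any point W in the Grassmannian G(2,n) represented by a 2×n matrix with columns (x_i, y_i), and any indices 1 ≤ i_1 < ... < i_{d+1} ≤ n, the (d+1)×(d+1) minor of the Veronese image matrix (whose j-th column is (x_j^d, x_j^{d-1}y_j, ..., y_j^d)) on columns i_1,...,i_{d+1} equals the product over all pairs 1 ≤ a < b ≤ d+1 of the 2×2 minors x_{i_a} y_{i_b} - x_{i_b} y_{i_a}. -/
open Finset Matrix

theorem Finset.prod_prod_Iio_eq_prod_prod_Ioi {α M : Type*} [Fintype α] [Preorder α]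
    [LocallyFiniteOrderBot α] [LocallyFiniteOrderTop α] [CommMonoid M] (f : α → α → M) :
    ∏ b, ∏ a ∈ Iio b, f a b = ∏ a, ∏ b ∈ Ioi a, f a b :=
  prod_comm' fun b a => by simp only [mem_univ, mem_Iio, mem_Ioi, true_and, and_true]

theorem Matrix.of_pow_sub_mul_pow_eq_transpose_projVandermonde {R : Type*} [CommRing R]
    {d : ℕ} (x y : Fin (d + 1) → R) :
    (Matrix.of fun (k j : Fin (d + 1)) => x j ^ (d - (k : ℕ)) * y j ^ (k : ℕ)) =
      (projVandermonde y x)ᵀ := by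
  ext k j
  rw [transpose_apply, projVandermonde_apply, of_apply, Fin.val_rev, mul_comm]
  congr 2
  omega

theorem veronese_minor_eq_prod_two_minors_general (K : Type*) [Field K] (d n : ℕ)
    (x y : Fin n → K) (i : Fin (d + 1) → Fin n) :
    (Matrix.of fun (k j : Fin (d + 1)) =>
        x (i j) ^ (d - (k : ℕ)) * y (i j) ^ (k : ℕ)).det =
      ∏ b : Fin (d + 1), ∏ a ∈ Finset.Iio b,
        (x (i a) * y (i b) - x (i b) * y (i a)) := by
  rw [of_pow_sub_mul_pow_eq_transpose_projVandermonde (fun j => x (i j)) (fun j => y (i j)),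
    det_transpose, det_projVandermonde, prod_prod_Iio_eq_prod_prod_Ioi]
  exact prod_congr rfl fun a _ => prod_congr rfl fun b _ => by ring

/-- generalized Vandermonde identity.
For a 2×n matrix with columns `(x j, y j)` over a field, and strictly increasing
column indices `i : Fin (d+1) → Fin n`, the maximal minor of the d-th Veronese
image matrix (whose row `k` has entries `x j ^ (d-k) * y j ^ k`) on those columns
equals the product of the 2×2 minors `x (i a) * y (i b) - x (i b) * y (i a)`
over all pairs `a < b`. -/
theorem veronese_minor_eq_prod_two_minors (K : Type*) [Field K] (d n : ℕ)
    (x y : Fin n → K) (i : Fin (d + 1) → Fin n) (hi : StrictMono i) :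
    (Matrix.of fun (k j : Fin (d + 1)) =>
        x (i j) ^ (d - (k : ℕ)) * y (i j) ^ (k : ℕ)).det =
      ∏ b : Fin (d + 1), ∏ a ∈ Finset.Iio b,
        (x (i a) * y (i b) - x (i b) * y (i a)) :=
  veronese_minor_eq_prod_two_minors_general K d n x y i
end

section
/- Let M be a matroid of rank 2 on the ground set [n], given as a collection of 2-element bases satisfying the basis exchange axiom. For d+1 ≤ n, define θ_d(M) to be the collection of (d+1)-element subsets I of [n] such that every 2-element subset of I is a basis of M. Then if θ_d(M) is nonempty, it is the set of bases of a matroid, i.e., it satisfies the basis exchange axiom. -/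
/-- The basis exchange axiom for a collection of finite sets. -/
def ExchangeAxiom {α : Type*} [DecidableEq α] (B : Finset (Finset α)) : Prop :=
  ∀ B₁ ∈ B, ∀ B₂ ∈ B, ∀ a ∈ B₁ \ B₂,
    ∃ b ∈ B₂ \ B₁, insert b (B₁.erase a) ∈ B

/-- If `M` is (the set of bases of) a rank-2 matroid on `Fin n`
and `θ_d(M)` — the set of `(d+1)`-subsets whose 2-subsets all lie in `M` — is
nonempty, then `θ_d(M)` satisfies the basis exchange axiom, i.e. it is the set
of bases of a matroid. -/
theorem veroneseImage_exchangeAxiom (n d : ℕ) (M : Finset (Finset (Fin n)))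
    (hMne : M.Nonempty) (hMcardTwo : ∀ B ∈ M, B.card = 2)
    (hMex : ExchangeAxiom M)
    (θ : Finset (Finset (Fin n)))
    (hθ : ∀ I : Finset (Fin n),
      I ∈ θ ↔ I.card = d + 1 ∧ ∀ P ⊆ I, P.card = 2 → P ∈ M)
    (hθne : θ.Nonempty) :
    ExchangeAxiom θ := by
  classical
  intro I₁ hI₁ I₂ hI₂ a ha
  obtain ⟨hI₁c, hI₁M⟩ := (hθ I₁).1 hI₁
  obtain ⟨hI₂c, hI₂M⟩ := (hθ I₂).1 hI₂
  rw [Finset.mem_sdiff] at ha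
  obtain ⟨haI₁, haI₂⟩ := ha
  by_contra hcon
  push_neg at hcon
  -- hcon : ∀ b ∈ I₂ \ I₁, insert b (I₁.erase a) ∉ θ
  have key : ∀ x ∈ I₂, x ∉ I₁ → ∃ c, c ∈ I₁.erase a ∧ ({x, c} : Finset (Fin n)) ∉ M := by
    intro x hx hxI₁
    have hxe : x ∉ I₁.erase a := fun h => hxI₁ (Finset.mem_of_mem_erase h)
    have hcard : (insert x (I₁.erase a)).card = d + 1 := by
      rw [Finset.card_insert_of_notMem hxe, Finset.card_erase_of_mem haI₁, hI₁c]
      omega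
    have hnot := hcon x (Finset.mem_sdiff.mpr ⟨hx, hxI₁⟩)
    rw [hθ] at hnot
    push_neg at hnot
    obtain ⟨P, hPsub, hP2, hPM⟩ := hnot hcard
    by_cases hxP : x ∈ P
    · obtain ⟨u, v, huv, rfl⟩ := Finset.card_eq_two.1 hP2
      rcases Finset.mem_insert.1 hxP with rfl | hv
      · refine ⟨v, ?_, hPM⟩
        have hv' : v ∈ insert x (I₁.erase a) := hPsub (by simp)
        rcases Finset.mem_insert.1 hv' with rfl | h
        · exact absurd rfl huv
        · exact h
      · have hv' : x = v := Finset.mem_singleton.1 hv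
        subst hv'
        refine ⟨u, ?_, ?_⟩
        · have hu' : u ∈ insert x (I₁.erase a) := hPsub (by simp)
          rcases Finset.mem_insert.1 hu' with rfl | h
          · exact absurd rfl huv
          · exact h
        · rwa [Finset.pair_comm] at hPM
    · have hsub : P ⊆ I₁ := fun y hy => by
        rcases Finset.mem_insert.1 (hPsub hy) with rfl | h
        · exact absurd hy hxP
        · exact Finset.mem_of_mem_erase h
      exact absurd (hI₁M P hsub hP2) hPM
  set f : Fin n → Fin n := fun x =>
    if h : x ∈ I₂ ∧ x ∉ I₁ then Classical.choose (key x h.1 h.2) else x with hf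
  have hmaps : ∀ x ∈ I₂, f x ∈ I₁.erase a := by
    intro x hx
    by_cases h : x ∈ I₁
    · have hfx : f x = x := by simp [hf, h]
      rw [hfx]
      exact Finset.mem_erase.2 ⟨fun he => haI₂ (he ▸ hx), h⟩
    · have hfx : f x = Classical.choose (key x hx h) := by simp [hf, hx, h]
      rw [hfx]
      exact (Classical.choose_spec (key x hx h)).1
  have hlt : (I₁.erase a).card < I₂.card := by
    rw [Finset.card_erase_of_mem haI₁, hI₁c, hI₂c]; omega
  obtain ⟨x, hx, y, hy, hxy, hfxy⟩ :=
    Finset.exists_ne_map_eq_of_card_lt_of_maps_to hlt hmaps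
  have hane : a ∉ ({x, y} : Finset (Fin n)) := by
    intro h
    rcases Finset.mem_insert.1 h with rfl | h
    · exact haI₂ hx
    · exact haI₂ ((Finset.mem_singleton.1 h) ▸ hy)
  have hxyM : ({x, y} : Finset (Fin n)) ∈ M := by
    apply hI₂M
    · intro z hz
      rcases Finset.mem_insert.1 hz with rfl | hz
      · exact hx
      · exact (Finset.mem_singleton.1 hz) ▸ hy
    · exact Finset.card_pair hxy
  by_cases hx1 : x ∈ I₁ <;> by_cases hy1 : y ∈ I₁
  · have h1 : f x = x := by simp [hf, hx1]
    have h2 : f y = y := by simp [hf, hy1]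
    exact hxy (by rw [← h1, ← h2, hfxy])
  · have h1 : f x = x := by simp [hf, hx1]
    have h2 : f y = Classical.choose (key y hy hy1) := by simp [hf, hy, hy1]
    have hspec := Classical.choose_spec (key y hy hy1)
    rw [h1, h2] at hfxy
    apply hspec.2
    rw [← hfxy]
    rwa [Finset.pair_comm] at hxyM
  · have h1 : f x = Classical.choose (key x hx hx1) := by simp [hf, hx, hx1]
    have h2 : f y = y := by simp [hf, hy1]
    have hspec := Classical.choose_spec (key x hx hx1)
    rw [h1, h2] at hfxy
    apply hspec.2
    rw [hfxy]
    exact hxyM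
  · have h1 : f x = Classical.choose (key x hx hx1) := by simp [hf, hx, hx1]
    have h2 : f y = Classical.choose (key y hy hy1) := by simp [hf, hy, hy1]
    have hspecx := Classical.choose_spec (key x hx hx1)
    have hspecy := Classical.choose_spec (key y hy hy1)
    set c := Classical.choose (key x hx hx1) with hc
    have hcy : Classical.choose (key y hy hy1) = c := by rw [← h1, ← h2, hfxy]
    rw [hcy] at hspecy
    obtain ⟨hcmem, hxc⟩ := hspecx
    obtain ⟨_, hyc⟩ := hspecy
    have hca : c ≠ a := (Finset.mem_erase.1 hcmem).1
    have hcI₁ : c ∈ I₁ := Finset.mem_of_mem_erase hcmem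
    have hcaM : ({c, a} : Finset (Fin n)) ∈ M := by
      apply hI₁M
      · intro z hz
        rcases Finset.mem_insert.1 hz with rfl | hz
        · exact hcI₁
        · exact (Finset.mem_singleton.1 hz) ▸ haI₁
      · exact Finset.card_pair hca
    have haMem : a ∈ ({c, a} : Finset (Fin n)) \ ({x, y} : Finset (Fin n)) :=
      Finset.mem_sdiff.2 ⟨by simp, hane⟩
    obtain ⟨e, he, hins⟩ := hMex _ hcaM _ hxyM a haMem
    have herase : ({c, a} : Finset (Fin n)).erase a = {c} := by
      rw [Finset.erase_insert_of_ne hca, Finset.erase_singleton]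
      rfl
    rw [herase] at hins
    rw [Finset.mem_sdiff] at he
    rcases Finset.mem_insert.1 he.1 with rfl | he'
    · exact hxc hins
    · have : e = y := Finset.mem_singleton.1 he'
      subst this
      exact hyc hins
end

section
/- Define a sequence of symmetric polynomials f_m in three variables by the generating function ∏_{i=1}^3 (1 - 2x_i t)^{-1} · ∏_{1≤i<j≤3} (1 - (x_i + x_j)t)^{-1} = ∑_{m≥0} f_m t^m. Then f_0 = 1, f_1 = 4 s_1, f_2 = 11 s_2 + 6 s_{1,1}, and for m ≥ 3 the recursion f_m = 2 s_1 · f_{m-1} - (s_2 + 2 s_{1,1}) · f_{m-2} + s_{2,1} · f_{m-3} + 2^m · s_m holds, where s_λ denotes the Schur polynomial in three variables for the partition λ and s_m = h_m is the complete homogeneous symmetric polynomial of degree m. -/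
/-!
Over any commutative ring, `∏ᵢ (1 - xᵢt)` is the inverse of the generating function `∑ hₘ tᵐ`
of the complete homogeneous symmetric polynomials, since it is the product of the geometric series
`∑ xᵢᵐ tᵐ`; substituting `t ↦ 2t`, the three factors `1 - 2xᵢt` cancel against `∑ 2ᵐ hₘ tᵐ`. Hence
`(∑ fₘ tᵐ) · ∏_{i<j} (1 - (xᵢ + xⱼ)t) = ∑ 2ᵐ hₘ tᵐ`, and the elementary symmetric functions of
the pair sums `xᵢ + xⱼ` are `2s₁`, `s₂ + 2s₁,₁` and `s₂,₁`. Comparing coefficients of `tᵐ` gives the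
recursion, and for `m ≤ 2` the initial values, using `h₁ = s₁` and `s₁² = s₂ + s₁,₁`.
-/

open MvPolynomial

/-- Ring of polynomials in three variables over `ℚ`. -/
noncomputable abbrev R3 : Type := MvPolynomial (Fin 3) ℚ

/-- Complete homogeneous symmetric polynomial of degree `m` in three variables;
this is also the single-row Schur polynomial `s_m`. -/
noncomputable def h3 (m : ℕ) : R3 :=
  ∑ s ∈ (Finset.univ : Finset (Fin 3)).sym m, ((s : Multiset (Fin 3)).map MvPolynomial.X).prod

/-- The Schur polynomial `s₁ = e₁`. -/
noncomputable def s1 : R3 := esymm (Fin 3) ℚ 1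
/-- The Schur polynomial `s₁,₁ = e₂`. -/
noncomputable def s11 : R3 := esymm (Fin 3) ℚ 2
/-- The Schur polynomial `s₂ = h₂`. -/
noncomputable def s2 : R3 := h3 2
/-- The Schur polynomial `s₂,₁ = e₁e₂ - e₃`. -/
noncomputable def s21 : R3 := esymm (Fin 3) ℚ 1 * esymm (Fin 3) ℚ 2 - esymm (Fin 3) ℚ 3

namespace PowerSeries

theorem rescale_C {S : Type*} [CommSemiring S] (a r : S) : rescale a (C r) = C r := by
  ext n
  rcases n with _ | n <;> simp [coeff_C]

variable {S : Type*} [CommRing S]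

theorem mk_pow_mul_one_sub_C_mul_X (a : S) : mk (a ^ ·) * (1 - C a * X) = 1 := by
  simpa [rescale_mk, rescale_X] using congrArg (rescale a) (mk_one_mul_one_sub_eq_one S)

theorem coeff_mul_prod_three_one_sub_C_mul_X (f : S⟦X⟧) (a b c : S) (n : ℕ) :
    coeff n (f * ((1 - C a * X) * (1 - C b * X) * (1 - C c * X))) =
      coeff n f - (if 1 ≤ n then (a + b + c) * coeff (n - 1) f else 0)
        + (if 2 ≤ n then (a * b + a * c + b * c) * coeff (n - 2) f else 0)
        - (if 3 ≤ n then a * b * c * coeff (n - 3) f else 0) := by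
  have hexpand : f * ((1 - C a * X) * (1 - C b * X) * (1 - C c * X)) =
      f - C (a + b + c) * (f * X ^ 1) + C (a * b + a * c + b * c) * (f * X ^ 2)
        - C (a * b * c) * (f * X ^ 3) := by
    simp only [map_add, map_mul]; ring
  rw [hexpand, map_sub, map_add, map_sub, coeff_C_mul, coeff_C_mul, coeff_C_mul,
    coeff_mul_X_pow', coeff_mul_X_pow', coeff_mul_X_pow']
  split_ifs <;> ring

end PowerSeries

namespace MvPolynomial

variable (σ R : Type*) [Fintype σ] [DecidableEq σ]

theorem sum_finsuppAntidiag_prod_X_pow [CommSemiring R] (n : ℕ) :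
    ∑ l ∈ Finset.univ.finsuppAntidiag n, ∏ i, (X i : MvPolynomial σ R) ^ l i = hsymm σ R n := by
  refine Finset.sum_bij' (fun l hl => ⟨Finsupp.toMultiset l, ?_⟩)
    (fun s _ => Multiset.toFinsupp s.1) (fun _ _ => Finset.mem_univ _) ?_ ?_ ?_ ?_
  · rw [Finset.mem_finsuppAntidiag] at hl
    rw [Finsupp.card_toMultiset, Finsupp.sum_fintype _ _ (fun _ => rfl)]
    exact hl.1
  · intro s _
    rw [Finset.mem_finsuppAntidiag]
    refine ⟨?_, Finset.subset_univ _⟩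
    change ∑ i, s.1.count i = n
    simp
  · intro l _
    simp
  · intro s _
    ext1
    simp
  · intro l _
    rw [Finset.prod_multiset_map_count, Finsupp.toFinset_toMultiset]
    simp only [Finsupp.count_toMultiset]
    exact (Finset.prod_subset (Finset.subset_univ _) (fun i _ hi => by simp_all)).symm

theorem mk_hsymm_mul_prod_one_sub_C_X_mul_X [CommRing R] :
    PowerSeries.mk (hsymm σ R ·) * ∏ i, (1 - PowerSeries.C (X i) * PowerSeries.X) = 1 := by
  have hprod :
      PowerSeries.mk (hsymm σ R ·) = ∏ i, PowerSeries.mk ((X i : MvPolynomial σ R) ^ ·) := by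
    ext n
    simp only [PowerSeries.coeff_prod, PowerSeries.coeff_mk, sum_finsuppAntidiag_prod_X_pow]
  rw [hprod, ← Finset.prod_mul_distrib]
  simp [PowerSeries.mk_pow_mul_one_sub_C_mul_X]

variable [CommRing R]

theorem esymm_one_fin_three : esymm (Fin 3) R 1 = X 0 + X 1 + X 2 := by
  rw [esymm_one, Fin.sum_univ_three]

theorem esymm_two_fin_three : esymm (Fin 3) R 2 = X 0 * X 1 + X 0 * X 2 + X 1 * X 2 := by
  have h : (Finset.univ : Finset (Fin 3)).powersetCard 2 = {{0, 1}, {0, 2}, {1, 2}} := by decide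
  rw [esymm, h, Finset.sum_insert (by decide), Finset.sum_insert (by decide), Finset.sum_singleton,
    Finset.prod_pair (by decide), Finset.prod_pair (by decide), Finset.prod_pair (by decide),
    add_assoc]

theorem esymm_three_fin_three : esymm (Fin 3) R 3 = X 0 * X 1 * X 2 := by
  have h : (Finset.univ : Finset (Fin 3)).powersetCard 3 = {{0, 1, 2}} := by decide
  rw [esymm, h, Finset.sum_singleton, Finset.prod_insert (by decide), Finset.prod_pair (by decide),
    mul_assoc]

theorem hsymm_two_fin_three :
    hsymm (Fin 3) R 2 = (X 0 + X 1 + X 2) ^ 2 - (X 0 * X 1 + X 0 * X 2 + X 1 * X 2) := by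
  have h := congrArg (PowerSeries.coeff 2) (mk_hsymm_mul_prod_one_sub_C_X_mul_X (Fin 3) R)
  rw [Fin.prod_univ_three, PowerSeries.coeff_mul_prod_three_one_sub_C_mul_X] at h
  simp only [PowerSeries.coeff_mk, PowerSeries.coeff_one] at h
  norm_num [hsymm_one, Fin.sum_univ_three] at h
  linear_combination h

end MvPolynomial

theorem h3_eq_hsymm (m : ℕ) : h3 m = hsymm (Fin 3) ℚ m := by
  rw [h3, hsymm]
  refine Finset.sum_congr (Finset.eq_univ_of_forall fun s => ?_) fun _ _ => rfl
  exact Finset.mem_sym_iff.mpr fun _ _ => Finset.mem_univ _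

theorem h3_one : h3 1 = s1 := by
  rw [h3_eq_hsymm, hsymm_one, s1, esymm_one]

theorem s1_sq : s1 ^ 2 = s2 + s11 := by
  rw [s1, s2, s11, h3_eq_hsymm, hsymm_two_fin_three, esymm_one_fin_three, esymm_two_fin_three]
  ring

theorem pairSums_sum : (X 0 + X 1) + (X 0 + X 2) + (X 1 + X 2) = (2 * s1 : R3) := by
  rw [s1, esymm_one_fin_three]
  ring

theorem pairSums_sum_mul : (X 0 + X 1) * (X 0 + X 2) + (X 0 + X 1) * (X 1 + X 2)
    + (X 0 + X 2) * (X 1 + X 2) = (s2 + 2 * s11 : R3) := by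
  rw [s2, s11, h3_eq_hsymm, hsymm_two_fin_three, esymm_two_fin_three]
  ring

theorem pairSums_prod : (X 0 + X 1) * (X 0 + X 2) * (X 1 + X 2) = (s21 : R3) := by
  rw [s21, esymm_one_fin_three, esymm_two_fin_three, esymm_three_fin_three]
  ring

theorem mk_two_pow_mul_h3_mul :
    PowerSeries.mk (fun m => 2 ^ m * h3 m) *
      ((1 - 2 * PowerSeries.C (R := R3) (X 0) * PowerSeries.X) *
       (1 - 2 * PowerSeries.C (R := R3) (X 1) * PowerSeries.X) *
       (1 - 2 * PowerSeries.C (R := R3) (X 2) * PowerSeries.X)) = 1 := by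
  have h := congrArg (PowerSeries.rescale (2 : R3)) (mk_hsymm_mul_prod_one_sub_C_X_mul_X (Fin 3) ℚ)
  simp only [map_mul, map_one, map_sub, PowerSeries.rescale_mk, PowerSeries.rescale_X,
    PowerSeries.rescale_C, Fin.prod_univ_three] at h
  rw [funext fun m => congrArg (2 ^ m * ·) (h3_eq_hsymm m),
    show (2 : PowerSeries R3) = PowerSeries.C 2 from (map_ofNat _ 2).symm]
  convert h using 2
  ring

/-- Let `f_m` be defined by the generating function
`∏ᵢ (1-2xᵢt)⁻¹ · ∏_{i<j} (1-(xᵢ+xⱼ)t)⁻¹ = ∑ f_m t^m` (expressed below by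
multiplying both sides by the denominators). Then `f₀ = 1`, `f₁ = 4s₁`,
`f₂ = 11s₂ + 6s₁,₁`, and for `m ≥ 3`,
`f_m = 2s₁f_{m-1} - (s₂+2s₁,₁)f_{m-2} + s₂,₁f_{m-3} + 2^m s_m`. -/
theorem genfun_recursion (f : ℕ → R3)
    (hf : PowerSeries.mk f *
        ((1 - 2 * PowerSeries.C (R := R3) (MvPolynomial.X 0) * PowerSeries.X) *
         (1 - 2 * PowerSeries.C (R := R3) (MvPolynomial.X 1) * PowerSeries.X) *
         (1 - 2 * PowerSeries.C (R := R3) (MvPolynomial.X 2) * PowerSeries.X) *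
         (1 - PowerSeries.C (R := R3) (MvPolynomial.X 0 + MvPolynomial.X 1) * PowerSeries.X) *
         (1 - PowerSeries.C (R := R3) (MvPolynomial.X 0 + MvPolynomial.X 2) * PowerSeries.X) *
         (1 - PowerSeries.C (R := R3) (MvPolynomial.X 1 + MvPolynomial.X 2) * PowerSeries.X)) = 1) :
    f 0 = 1 ∧ f 1 = 4 * s1 ∧ f 2 = 11 * s2 + 6 * s11 ∧
      ∀ m : ℕ, 3 ≤ m →
        f m = 2 * s1 * f (m - 1) - (s2 + 2 * s11) * f (m - 2)
          + s21 * f (m - 3) + 2 ^ m * h3 m := by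
  have hfB : PowerSeries.mk f *
      ((1 - PowerSeries.C (R := R3) (X 0 + X 1) * PowerSeries.X) *
       (1 - PowerSeries.C (R := R3) (X 0 + X 2) * PowerSeries.X) *
       (1 - PowerSeries.C (R := R3) (X 1 + X 2) * PowerSeries.X)) =
      PowerSeries.mk (fun m => 2 ^ m * h3 m) := by
    linear_combination PowerSeries.mk (fun m => 2 ^ m * h3 m) * hf -
      (PowerSeries.mk f * ((1 - PowerSeries.C (R := R3) (X 0 + X 1) * PowerSeries.X) *
       (1 - PowerSeries.C (R := R3) (X 0 + X 2) * PowerSeries.X) *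
       (1 - PowerSeries.C (R := R3) (X 1 + X 2) * PowerSeries.X))) * mk_two_pow_mul_h3_mul
  have key (n : ℕ) := congrArg (PowerSeries.coeff n) hfB
  simp only [PowerSeries.coeff_mul_prod_three_one_sub_C_mul_X, PowerSeries.coeff_mk,
    pairSums_sum, pairSums_sum_mul, pairSums_prod] at key
  have hf0 : f 0 = 1 := by simpa [h3_eq_hsymm] using key 0
  have hf1 : f 1 = 4 * s1 := by
    have h := key 1
    norm_num [hf0, h3_one] at h
    linear_combination h
  have hf2 : f 2 = 11 * s2 + 6 * s11 := by
    have h : f 2 - 2 * s1 * (4 * s1) + (s2 + 2 * s11) = 4 * s2 := by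
      have h := key 2
      norm_num [hf0, hf1] at h
      exact h
    linear_combination h + 8 * s1_sq
  refine ⟨hf0, hf1, hf2, fun m hm => ?_⟩
  have h := key m
  rw [if_pos (by omega), if_pos (by omega), if_pos (by omega)] at h
  linear_combination h
end

section
/- Let M be a rank-2 matroid on [n] (set of bases, each of size 2). For I, J ∈ θ_d(M) (i.e., all pairs inside I and inside J are bases of M) and a ∈ I \ J, there is at most one element b ∈ J with {a, b} not a basis of M. -/
/-- Let `M` be (the bases of) a rank-2 matroid on `Fin n`, and
let `I, J` be `(d+1)`-subsets all of whose 2-subsets are bases of `M`.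
Then for `a ∈ I \ J` there is at most one `b ∈ J` with `{a, b} ∉ M`. -/
theorem at_most_one_nonbasis (n d : ℕ) (M : Finset (Finset (Fin n)))
    (hMne : M.Nonempty) (hMcard : ∀ B ∈ M, B.card = 2) (hMex : ExchangeAxiom M)
    (I J : Finset (Fin n))
    (hI : I.card = d + 1) (hIpairs : ∀ P ⊆ I, P.card = 2 → P ∈ M)
    (hJ : J.card = d + 1) (hJpairs : ∀ P ⊆ J, P.card = 2 → P ∈ M)
    (a : Fin n) (ha : a ∈ I \ J) :
    (J.filter fun b => ({a, b} : Finset (Fin n)) ∉ M).card ≤ 1 := by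
  rw [Finset.mem_sdiff] at ha
  obtain ⟨haI, haJ⟩ := ha
  rw [Finset.card_le_one]
  intro b₁ hb₁ b₂ hb₂
  by_contra hne
  rw [Finset.mem_filter] at hb₁ hb₂
  obtain ⟨hb₁J, hb₁M⟩ := hb₁
  obtain ⟨hb₂J, hb₂M⟩ := hb₂
  -- {b₁, b₂} is a basis
  have hb12 : ({b₁, b₂} : Finset (Fin n)) ∈ M := by
    apply hJpairs
    · intro x hx
      simp only [Finset.mem_insert, Finset.mem_singleton] at hx
      rcases hx with rfl | rfl <;> assumption
    · rw [Finset.card_insert_of_notMem (by simpa using hne), Finset.card_singleton]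
  -- I has a second element a'
  have hI2 : 2 ≤ I.card := by
    rw [hI]
    have : 2 ≤ J.card := Finset.one_lt_card.mpr ⟨b₁, hb₁J, b₂, hb₂J, hne⟩
    omega
  obtain ⟨a', ha'I, ha'ne⟩ : ∃ a' ∈ I, a' ≠ a := by
    have := Finset.one_lt_card.mp hI2
    obtain ⟨x, hx, y, hy, hxy⟩ := this
    by_cases hxa : x = a
    · exact ⟨y, hy, by rw [← hxa]; exact fun h => hxy h.symm⟩
    · exact ⟨x, hx, hxa⟩
  have haa' : ({a, a'} : Finset (Fin n)) ∈ M := by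
    apply hIpairs
    · intro x hx
      simp only [Finset.mem_insert, Finset.mem_singleton] at hx
      rcases hx with rfl | rfl <;> assumption
    · rw [Finset.card_insert_of_notMem (by simpa using ha'ne.symm), Finset.card_singleton]
  have ha'b₁ : a' ≠ b₁ := fun h => hb₁M (h ▸ haa')
  have ha'b₂ : a' ≠ b₂ := fun h => hb₂M (h ▸ haa')
  have hab₁ : a ≠ b₁ := fun h => haJ (h ▸ hb₁J)
  have hab₂ : a ≠ b₂ := fun h => haJ (h ▸ hb₂J)
  obtain ⟨b, hb, hbM⟩ := hMex _ haa' _ hb12 a' (by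
    rw [Finset.mem_sdiff]
    constructor
    · simp
    · simp only [Finset.mem_insert, Finset.mem_singleton]
      push_neg
      exact ⟨ha'b₁, ha'b₂⟩)
  simp only [Finset.mem_sdiff, Finset.mem_insert, Finset.mem_singleton] at hb
  have herase : ({a, a'} : Finset (Fin n)).erase a' = {a} := by
    rw [Finset.erase_insert_of_ne ha'ne.symm, Finset.erase_singleton]
    rfl
  rw [herase] at hbM
  have hba : ({a, b} : Finset (Fin n)) ∈ M := by
    rwa [Finset.pair_comm]
  rcases hb.1 with rfl | rfl
  · exact hb₁M hba
  · exact hb₂M hba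
end
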